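/- arXiv:1404.7599 — 9 statements merged into one kernel-verified Lean document; each statement's English description precedes it below -/
import Mathlib

section
/- Let (𝒳, 𝒵, 𝒴) be a cotorsion triple in 𝒜. Then the subcategory 𝒵 is thick (i.e., 𝒵 is closed under direct summands and, for every short exact sequence 0 → A → B → C → 0 in 𝒜 in which two of the objects A, B, C lie in 𝒵, the third also lies in 𝒵) if and only if the cotorsion triple (𝒳, 𝒵, 𝒴) is hereditary. -/
open CategoryTheory Abelian Limits ZeroObject

universe v u

variable {A : Type u} [Category.{v} A] [Abelian A]
  [EnoughProjectives A] [EnoughInjectives A]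

noncomputable instance : HasExt.{max u v} A :=
  have := HasDerivedCategory.standard A
  hasExt_of_hasDerivedCategory A

/-- Vanishing of the `n`-th Ext group. -/
def extZero (M N : A) (n : ℕ) : Prop := Subsingleton (Abelian.Ext M N n)

/-- `(X, Z)` is a cotorsion pair: `X` consists exactly of the objects `M` with
`Ext¹(M, Z') = 0` for all `Z' ∈ Z`, and `Z` consists exactly of the objects `M`
with `Ext¹(X', M) = 0` for all `X' ∈ X`. -/
def IsCotorsionPair (X Z : Set A) : Prop :=
  (∀ M : A, M ∈ X ↔ ∀ Z' ∈ Z, extZero M Z' 1) ∧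
  (∀ M : A, M ∈ Z ↔ ∀ X' ∈ X, extZero X' M 1)

/-- A cotorsion pair is hereditary if `Ext^i(X', Z') = 0` for all `X' ∈ X`,
`Z' ∈ Z` and all `i ≥ 1`. -/
def IsHereditaryCotorsionPair (X Z : Set A) : Prop :=
  IsCotorsionPair X Z ∧ ∀ X' ∈ X, ∀ Z' ∈ Z, ∀ i : ℕ, 1 ≤ i → extZero X' Z' i

/-- A cotorsion pair is complete if every object `M` admits short exact sequences
`0 → Z' → X' → M → 0` and `0 → M → Z'' → X'' → 0` with `X', X'' ∈ X` and `Z', Z'' ∈ Z`. -/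
def IsCompleteCotorsionPair (X Z : Set A) : Prop :=
  IsCotorsionPair X Z ∧
    ∀ M : A,
      (∃ (Z' X' : A) (f : Z' ⟶ X') (g : X' ⟶ M) (w : f ≫ g = 0),
        (ShortComplex.mk f g w).ShortExact ∧ X' ∈ X ∧ Z' ∈ Z) ∧
      (∃ (Z'' X'' : A) (f : M ⟶ Z'') (g : Z'' ⟶ X'') (w : f ≫ g = 0),
        (ShortComplex.mk f g w).ShortExact ∧ X'' ∈ X ∧ Z'' ∈ Z)

/-- `(X, Z, Y)` is a cotorsion triple if `(X, Z)` and `(Z, Y)` are cotorsion pairs. -/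
def IsCotorsionTriple (X Z Y : Set A) : Prop :=
  IsCotorsionPair X Z ∧ IsCotorsionPair Z Y

/-- A cotorsion triple is hereditary if both constituent cotorsion pairs are hereditary. -/
def IsHereditaryCotorsionTriple (X Z Y : Set A) : Prop :=
  IsHereditaryCotorsionPair X Z ∧ IsHereditaryCotorsionPair Z Y

/-- A cotorsion triple is complete and hereditary if both constituent cotorsion pairs
are complete and hereditary. -/
def IsCompleteHereditaryCotorsionTriple (X Z Y : Set A) : Prop :=
  IsCompleteCotorsionPair X Z ∧ IsCompleteCotorsionPair Z Y ∧
    IsHereditaryCotorsionPair X Z ∧ IsHereditaryCotorsionPair Z Y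

/-- A full subcategory (class of objects) is thick if it is closed under direct
summands and has the two-out-of-three property for short exact sequences. -/
def IsThick (Z : Set A) : Prop :=
  (∀ M N : A, M ∈ Z → (∃ (i : N ⟶ M) (r : M ⟶ N), i ≫ r = 𝟙 N) → N ∈ Z) ∧
  (∀ S : ShortComplex A, S.ShortExact →
    (S.X₁ ∈ Z → S.X₂ ∈ Z → S.X₃ ∈ Z) ∧
    (S.X₁ ∈ Z → S.X₃ ∈ Z → S.X₂ ∈ Z) ∧
    (S.X₂ ∈ Z → S.X₃ ∈ Z → S.X₁ ∈ Z))

/-!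
For any cotorsion pair `(𝒳, 𝒵)`, the class `𝒵 = 𝒳^⊥` is closed under direct summands and
extensions. The long exact `Ext` sequences then show that `(𝒳, 𝒵)` is hereditary iff `𝒵` is
closed under cokernels of monomorphisms (dimension shifting along `0 → Z → I → Z' → 0` with `I`
injective, which lies in `𝒵`), and dually that `(𝒵, 𝒴)` is hereditary iff `𝒵 = ⊥𝒴` is closed
under kernels of epimorphisms (shifting along `0 → Z' → P → Z → 0` with `P` projective).
-/

variable {C : Type u} [Category.{v} C] [Abelian C]

lemma extZero.eq_zero {M N : C} {n : ℕ} (h : extZero M N n) (x : Ext M N n) : x = 0 :=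
  @Subsingleton.elim _ h x 0

lemma extZero_of_forall_eq_zero {M N : C} {n : ℕ} (h : ∀ x : Ext M N n, x = 0) :
    extZero M N n :=
  subsingleton_of_forall_eq 0 h

lemma extZero_of_projective (P N : C) [Projective P] (n : ℕ) : extZero P N (n + 1) :=
  Ext.subsingleton_of_projective P N n

lemma extZero_of_injective (M I : C) [Injective I] (n : ℕ) : extZero M I (n + 1) :=
  Ext.subsingleton_of_injective M I n

lemma extZero_of_retract {L M N : C} {n : ℕ} (i : N ⟶ M) (r : M ⟶ N) (hir : i ≫ r = 𝟙 N)
    (hM : extZero L M n) : extZero L N n := by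
  refine extZero_of_forall_eq_zero fun x => ?_
  calc x = (x.comp (Ext.mk₀ i) (add_zero n)).comp (Ext.mk₀ r) (add_zero n) := by
        rw [Ext.comp_assoc_of_second_deg_zero, Ext.mk₀_comp_mk₀, hir, Ext.comp_mk₀_id]
    _ = 0 := by rw [hM.eq_zero (x.comp _ _), Ext.zero_comp]

namespace CategoryTheory.ShortComplex.ShortExact

variable {S : ShortComplex C} (hS : S.ShortExact) {n : ℕ}
include hS

lemma extZero_to_X₂ (M : C) (h₁ : extZero M S.X₁ n) (h₃ : extZero M S.X₃ n) :
    extZero M S.X₂ n := by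
  refine extZero_of_forall_eq_zero fun x => ?_
  obtain ⟨x₁, rfl⟩ := Ext.covariant_sequence_exact₂ M hS x (h₃.eq_zero _)
  rw [h₁.eq_zero x₁, Ext.zero_comp]

lemma extZero_to_X₃ (M : C) (h₂ : extZero M S.X₂ n) (h₁ : extZero M S.X₁ (n + 1)) :
    extZero M S.X₃ n := by
  refine extZero_of_forall_eq_zero fun x => ?_
  obtain ⟨x₂, rfl⟩ := Ext.covariant_sequence_exact₃ M hS x rfl (h₁.eq_zero _)
  rw [h₂.eq_zero x₂, Ext.zero_comp]

lemma extZero_to_X₁ (M : C) (h₃ : extZero M S.X₃ n) (h₂ : extZero M S.X₂ (n + 1)) :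
    extZero M S.X₁ (n + 1) := by
  refine extZero_of_forall_eq_zero fun x => ?_
  obtain ⟨x₃, rfl⟩ := Ext.covariant_sequence_exact₁ M hS x (h₂.eq_zero _) rfl
  rw [h₃.eq_zero x₃, Ext.zero_comp]

lemma extZero_from_X₁ (N : C) (h₂ : extZero S.X₂ N n) (h₃ : extZero S.X₃ N (n + 1)) :
    extZero S.X₁ N n := by
  refine extZero_of_forall_eq_zero fun x => ?_
  obtain ⟨x₂, rfl⟩ := Ext.contravariant_sequence_exact₁ hS N x (add_comm 1 n) (h₃.eq_zero _)
  rw [h₂.eq_zero x₂, Ext.comp_zero]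

lemma extZero_from_X₃ (N : C) (h₁ : extZero S.X₁ N n) (h₂ : extZero S.X₂ N (n + 1)) :
    extZero S.X₃ N (n + 1) := by
  refine extZero_of_forall_eq_zero fun x => ?_
  obtain ⟨x₁, rfl⟩ := Ext.contravariant_sequence_exact₃ hS N x (h₂.eq_zero _) (add_comm 1 n)
  rw [h₁.eq_zero x₁, Ext.comp_zero]

end CategoryTheory.ShortComplex.ShortExact

lemma shortExact_injective_ι [EnoughInjectives C] (M : C) :
    (ShortComplex.mk _ _ (cokernel.condition (Injective.ι M))).ShortExact :=
  { exact := ShortComplex.exact_of_g_is_cokernel _ (cokernelIsCokernel _) }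

lemma shortExact_projective_π [EnoughProjectives C] (M : C) :
    (ShortComplex.mk _ _ (kernel.condition (Projective.π M))).ShortExact :=
  { exact := ShortComplex.exact_of_f_is_kernel _ (kernelIsKernel _) }

namespace IsCotorsionPair

variable {X Z : Set C} (h : IsCotorsionPair X Z)
include h

lemma injective_mem_right (I : C) [Injective I] : I ∈ Z :=
  (h.2 I).2 fun X' _ => extZero_of_injective X' I 0

lemma projective_mem_left (P : C) [Projective P] : P ∈ X :=
  (h.1 P).2 fun Z' _ => extZero_of_projective P Z' 0

lemma mem_right_of_retract {M N : C} (hM : M ∈ Z) (i : N ⟶ M) (r : M ⟶ N)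
    (hir : i ≫ r = 𝟙 N) : N ∈ Z :=
  (h.2 N).2 fun X' hX' => extZero_of_retract i r hir ((h.2 M).1 hM X' hX')

lemma mem_right_X₂ {S : ShortComplex C} (hS : S.ShortExact) (h₁ : S.X₁ ∈ Z)
    (h₃ : S.X₃ ∈ Z) : S.X₂ ∈ Z :=
  (h.2 _).2 fun X' hX' => hS.extZero_to_X₂ X' ((h.2 _).1 h₁ X' hX') ((h.2 _).1 h₃ X' hX')

lemma isHereditary_of_succ (hstep : ∀ n, (∀ X' ∈ X, ∀ Z' ∈ Z, extZero X' Z' (n + 1)) →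
    ∀ X' ∈ X, ∀ Z' ∈ Z, extZero X' Z' (n + 2)) :
    IsHereditaryCotorsionPair X Z := by
  have hsucc : ∀ n, ∀ X' ∈ X, ∀ Z' ∈ Z, extZero X' Z' (n + 1) := by
    intro n
    induction n with
    | zero => exact fun X' hX' Z' hZ' => (h.1 X').1 hX' Z' hZ'
    | succ n ih => exact hstep n ih
  exact ⟨h, fun X' hX' Z' hZ' i hi => Nat.sub_add_cancel hi ▸ hsucc (i - 1) X' hX' Z' hZ'⟩

lemma isHereditary_of_mem_right_X₃ [EnoughInjectives C]
    (hZ : ∀ S : ShortComplex C, S.ShortExact → S.X₁ ∈ Z → S.X₂ ∈ Z → S.X₃ ∈ Z) :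
    IsHereditaryCotorsionPair X Z :=
  h.isHereditary_of_succ fun _ ih X' hX' Z' hZ' =>
    have hS := shortExact_injective_ι Z'
    hS.extZero_to_X₁ X' (ih X' hX' _ (hZ _ hS hZ' (h.injective_mem_right _)))
      (extZero_of_injective _ _ _)

lemma isHereditary_of_mem_left_X₁ [EnoughProjectives C]
    (hX : ∀ S : ShortComplex C, S.ShortExact → S.X₂ ∈ X → S.X₃ ∈ X → S.X₁ ∈ X) :
    IsHereditaryCotorsionPair X Z :=
  h.isHereditary_of_succ fun _ ih X' hX' Z' hZ' =>
    have hS := shortExact_projective_π X'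
    hS.extZero_from_X₃ Z' (ih _ (hX _ hS (h.projective_mem_left _) hX') Z' hZ')
      (extZero_of_projective _ _ _)

end IsCotorsionPair

namespace IsHereditaryCotorsionPair

variable {X Z : Set C} (h : IsHereditaryCotorsionPair X Z)
include h

lemma mem_right_X₃ {S : ShortComplex C} (hS : S.ShortExact) (h₁ : S.X₁ ∈ Z)
    (h₂ : S.X₂ ∈ Z) : S.X₃ ∈ Z :=
  (h.1.2 _).2 fun X' hX' =>
    hS.extZero_to_X₃ X' ((h.1.2 _).1 h₂ X' hX') (h.2 X' hX' _ h₁ 2 (by norm_num))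

lemma mem_left_X₁ {S : ShortComplex C} (hS : S.ShortExact) (h₂ : S.X₂ ∈ X)
    (h₃ : S.X₃ ∈ X) : S.X₁ ∈ X :=
  (h.1.1 _).2 fun Z' hZ' =>
    hS.extZero_from_X₁ Z' ((h.1.1 _).1 h₂ Z' hZ') (h.2 _ h₃ Z' hZ' 2 (by norm_num))

end IsHereditaryCotorsionPair

/-- Let `(𝒳, 𝒵, 𝒴)` be a cotorsion triple in `𝒜`. Then `𝒵` is thick if and only
if the cotorsion triple `(𝒳, 𝒵, 𝒴)` is hereditary. -/
theorem thick_iff_hereditary (X Z Y : Set A) (h : IsCotorsionTriple X Z Y) :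
    IsThick Z ↔ IsHereditaryCotorsionTriple X Z Y := by
  obtain ⟨hXZ, hZY⟩ := h
  constructor
  · rintro ⟨-, h2of3⟩
    exact ⟨hXZ.isHereditary_of_mem_right_X₃ fun S hS => (h2of3 S hS).1,
      hZY.isHereditary_of_mem_left_X₁ fun S hS => (h2of3 S hS).2.2⟩
  · rintro ⟨hXZ', hZY'⟩
    exact ⟨fun M N hM ⟨i, r, hir⟩ => hXZ.mem_right_of_retract hM i r hir,
      fun S hS => ⟨hXZ'.mem_right_X₃ hS, hXZ.mem_right_X₂ hS, hZY'.mem_left_X₁ hS⟩⟩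
end

section
/- Let (𝒳, 𝒵, 𝒴) be a hereditary cotorsion triple in 𝒜. Then an object of 𝒜 belongs to both 𝒳 and 𝒵 if and only if it is a projective object, i.e., 𝒳 ∩ 𝒵 = 𝒫, the class of projective objects of 𝒜. -/
open CategoryTheory Abelian Limits ZeroObject

universe v u

variable {A : Type u} [Category.{v} A] [Abelian A]
  [EnoughProjectives A] [EnoughInjectives A]

/-!
If `M ∈ 𝒳 ∩ 𝒵`, choose `0 → K → P → M → 0` with `P` projective. Dimension shifting gives
`Ext¹(K, 𝒴) ≅ Ext²(M, 𝒴) = 0` because `(𝒵, 𝒴)` is hereditary, so `K ∈ 𝒵`. Then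
`Ext¹(M, K) = 0` because `M ∈ 𝒳`, so the sequence splits and `M` is a summand of `P`.
Conversely, projectives have no higher Ext, so they lie in the left class of every
cotorsion pair.
-/

namespace CategoryTheory.ShortComplex.ShortExact

universe w v' u'

variable {C : Type u'} [Category.{v'} C] [Abelian C] [HasExt.{w} C]
  {S : ShortComplex C} (hS : S.ShortExact)
include hS

lemma exists_section_of_subsingleton_ext_one [Subsingleton (Ext S.X₃ S.X₁ 1)] :
    ∃ s : S.X₃ ⟶ S.X₂, s ≫ S.g = 𝟙 S.X₃ := by
  obtain ⟨φ, hφ⟩ := Ext.covariant_sequence_exact₃ _ hS (Ext.mk₀ (𝟙 S.X₃)) (zero_add 1)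
    (by subsingleton)
  obtain ⟨s, rfl⟩ := Ext.homEquiv₀.symm.surjective φ
  exact ⟨s, Ext.homEquiv₀.symm.injective (by simpa using hφ)⟩

lemma projective_X₃_of_subsingleton_ext_one [Projective S.X₂]
    [Subsingleton (Ext S.X₃ S.X₁ 1)] : Projective S.X₃ :=
  let ⟨s, hs⟩ := hS.exists_section_of_subsingleton_ext_one
  Retract.projective ⟨s, S.g, hs⟩

lemma subsingleton_ext_X₁_of_projective_X₂ [Projective S.X₂] (Y : C) (n : ℕ)
    [Subsingleton (Ext S.X₃ Y (n + 2))] : Subsingleton (Ext S.X₁ Y (n + 1)) := by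
  refine subsingleton_of_forall_eq 0 fun x₁ => ?_
  obtain ⟨x₂, rfl⟩ := Ext.contravariant_sequence_exact₁ hS Y x₁ (n₁ := n + 2) (by omega)
    (by subsingleton)
  rw [Ext.eq_zero_of_projective x₂, Ext.comp_zero]

end CategoryTheory.ShortComplex.ShortExact

omit [EnoughProjectives A] [EnoughInjectives A] in
lemma IsCotorsionPair.mem_left_of_projective {X Z : Set A} (h : IsCotorsionPair X Z)
    (P : A) [Projective P] : P ∈ X :=
  (h.1 P).2 fun Z' _ => Ext.subsingleton_of_projective.{max u v} P Z' 0

omit [EnoughProjectives A] [EnoughInjectives A] in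
lemma IsHereditaryCotorsionPair.X₁_mem_left {X Z : Set A} (h : IsHereditaryCotorsionPair X Z)
    {S : ShortComplex A} (hS : S.ShortExact) [Projective S.X₂] (hX₃ : S.X₃ ∈ X) : S.X₁ ∈ X :=
  (h.1.1 S.X₁).2 fun Z' hZ' =>
    have : Subsingleton (Ext.{max u v} S.X₃ Z' 2) := h.2 S.X₃ hX₃ Z' hZ' 2 (by norm_num)
    hS.subsingleton_ext_X₁_of_projective_X₂ Z' 0

/-- Let `(𝒳, 𝒵, 𝒴)` be a hereditary cotorsion triple in `𝒜`. Then
`𝒳 ∩ 𝒵 = 𝒫`, the class of projective objects of `𝒜`. -/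
theorem inter_eq_projectives (X Z Y : Set A) (h : IsHereditaryCotorsionTriple X Z Y) :
    X ∩ Z = {M : A | Projective M} := by
  obtain ⟨⟨hXZ, -⟩, hZY⟩ := h
  ext M
  refine ⟨fun ⟨hMX, hMZ⟩ => ?_,
    fun (_ : Projective M) => ⟨hXZ.mem_left_of_projective M, hZY.1.mem_left_of_projective M⟩⟩
  let S := ShortComplex.mk _ _ (kernel.condition (Projective.π M))
  have hS : S.ShortExact := { exact := S.exact_of_f_is_kernel (kernelIsKernel S.g) }
  have hK : S.X₁ ∈ Z := hZY.X₁_mem_left hS hMZ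
  have : Subsingleton (Ext.{max u v} M S.X₁ 1) := (hXZ.1 M).1 hMX S.X₁ hK
  exact hS.projective_X₃_of_subsingleton_ext_one
end

section
/- Let (𝒳, 𝒵, 𝒴) be a complete hereditary cotorsion triple in 𝒜 and let M be an object of 𝒜. Then M ∈ 𝒴 if and only if for every object N, every epimorphism f : X → N that is a right 𝒳-approximation of N (X ∈ 𝒳 and composition with f maps Hom(X', X) onto Hom(X', N) for every X' ∈ 𝒳), and every morphism α : Ker(f) → M, there exists β : X → M with β ∘ g = α, where g : Ker(f) → X is the kernel inclusion. -/
open CategoryTheory Abelian Limits ZeroObject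

universe v u

variable {A : Type u} [Category.{v} A] [Abelian A]
  [EnoughProjectives A] [EnoughInjectives A]

/-!
If `M ∈ 𝒴`, maps from an object `Z₁ ∈ 𝒵` to `M` extend along every monomorphism `Z₁ ⟶ W`:
embed `W` into an object `Z'` of `𝒵`; by heredity the cokernel of the composite
`Z₁ ⟶ W ⟶ Z'` lies in `𝒵`, and `Ext¹(𝒵, M) = 0`. Given an `𝒳`-approximation `f : X₀ ⟶ N` and a
special `𝒳`-precover `0 → Z₁ → X₁ → N → 0`, the two maps onto `N` factor through each other, which
reduces extending maps out of `Ker f` along `Ker f ⟶ X₀` to extending them along `Z₁ ⟶ X₁`.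

Conversely, take a special `𝒵`-precover `0 → Y₀ → Z₀ → M → 0`, a special `𝒴`-preenvelope
`0 → Z₀ → Y₁ → Z₂ → 0` and a special `𝒳`-precover `X₂ ⟶ Y₁`. The composite `X₂ ⟶ Y₁ ⟶ Z₂` is an
epic `𝒳`-approximation whose kernel maps onto `Z₀`; extending `Ker ⟶ Z₀ ⟶ M` to `X₂` and descending
along `X₂ ⟶ Y₁` factors `Z₀ ⟶ M` through `Y₁ ∈ 𝒴`. As `Ext²(𝒵, Y₀) = 0`, every class in
`Ext¹(Z', M)` with `Z' ∈ 𝒵` comes from `Ext¹(Z', Z₀)`, hence factors through `Ext¹(Z', Y₁) = 0`.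
-/

universe w

namespace CategoryTheory

variable {C : Type*} [Category C] [Abelian C]

lemma ShortComplex.Exact.epi_lift_kernel_ι_comp {S : ShortComplex C} (hS : S.Exact) [Mono S.f]
    {X : C} (σ : X ⟶ S.X₂) [Epi σ] :
    Epi (hS.lift (kernel.ι (σ ≫ S.g) ≫ σ) (by simp)) := by
  let φ : pullback S.f σ ⟶ kernel (σ ≫ S.g) := kernel.lift _ (pullback.snd _ _) (by
    rw [← Category.assoc, ← pullback.condition, Category.assoc, S.zero, comp_zero])
  refine epi_of_epi_fac (f := φ) (h := pullback.fst S.f σ) ?_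
  rw [← cancel_mono S.f]
  simp [φ, pullback.condition]

lemma exists_extension_along_kernel_ι_of_factors {S : ShortComplex C} (hS : S.Exact) [Mono S.f]
    {X₀ M : C} {f : X₀ ⟶ S.X₃} {d : S.X₂ ⟶ X₀} (hd : d ≫ f = S.g) {d' : X₀ ⟶ S.X₂}
    (hd' : d' ≫ S.g = f) (hM : ∀ τ : S.X₁ ⟶ M, ∃ ψ : S.X₂ ⟶ M, S.f ≫ ψ = τ)
    (α : kernel f ⟶ M) : ∃ β : X₀ ⟶ M, kernel.ι f ≫ β = α := by
  let π : X₀ ⟶ kernel f := kernel.lift f (𝟙 X₀ - d' ≫ d) (by simp [hd, hd'])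
  let t : kernel f ⟶ S.X₁ := hS.lift (kernel.ι f ≫ d') (by simp [hd'])
  let u : S.X₁ ⟶ kernel f := kernel.lift f (S.f ≫ d) (by simp [hd])
  have ht : t ≫ S.f = kernel.ι f ≫ d' := hS.lift_f _ _
  -- `Ker f` is split off by `π` up to the error `t ≫ u`, which passes through `S.X₁`.
  have hπ : kernel.ι f ≫ π = 𝟙 _ - t ≫ u := by
    ext
    simp [π, u, reassoc_of% ht]
  obtain ⟨ψ, hψ⟩ := hM (u ≫ α)
  refine ⟨π ≫ α + d' ≫ ψ, ?_⟩
  rw [Preadditive.comp_add, reassoc_of% hπ, ← reassoc_of% ht, hψ]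
  simp

namespace ShortComplex.ShortExact

variable [HasExt.{w} C]

lemma exists_lift_of_subsingleton_ext_one {S : ShortComplex C} (hS : S.ShortExact) {W : C}
    (h : Subsingleton (Ext W S.X₁ 1)) (γ : W ⟶ S.X₃) : ∃ γ' : W ⟶ S.X₂, γ' ≫ S.g = γ := by
  obtain ⟨x, hx⟩ := Ext.covariant_sequence_exact₃ W hS (Ext.mk₀ γ) rfl (Subsingleton.elim _ _)
  obtain ⟨γ', rfl⟩ := (Ext.mk₀_bijective W S.X₂).2 x
  exact ⟨γ', (Ext.mk₀_bijective W S.X₃).1 (by simpa using hx)⟩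

lemma exists_extension_of_subsingleton_ext_one {S : ShortComplex C} (hS : S.ShortExact) {M : C}
    (h : Subsingleton (Ext S.X₃ M 1)) (τ : S.X₁ ⟶ M) : ∃ ψ : S.X₂ ⟶ M, S.f ≫ ψ = τ := by
  obtain ⟨x, hx⟩ :=
    Ext.contravariant_sequence_exact₁ hS M (Ext.mk₀ τ) rfl (Subsingleton.elim _ _)
  obtain ⟨ψ, rfl⟩ := (Ext.mk₀_bijective S.X₂ M).2 x
  exact ⟨ψ, (Ext.mk₀_bijective S.X₁ M).1 (by simpa using hx)⟩

lemma subsingleton_ext_one_X₃_of_g_factors {S : ShortComplex C} (hS : S.ShortExact)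
    {W Y : C} (h₂ : Subsingleton (Ext W S.X₁ 2)) {e : S.X₂ ⟶ Y} {γ : Y ⟶ S.X₃}
    (heγ : e ≫ γ = S.g) (hY : Subsingleton (Ext W Y 1)) : Subsingleton (Ext W S.X₃ 1) := by
  refine subsingleton_of_forall_eq 0 fun ξ => ?_
  obtain ⟨θ, rfl⟩ := Ext.covariant_sequence_exact₃ W hS ξ rfl (Subsingleton.elim _ _)
  rw [← heγ, ← Ext.mk₀_comp_mk₀, ← Ext.comp_assoc_of_second_deg_zero,
    Subsingleton.elim (θ.comp (Ext.mk₀ e) (add_zero 1)) 0, Ext.zero_comp]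

end ShortComplex.ShortExact

end CategoryTheory

section CotorsionPairs

variable {C : Type*} [Category C] [Abelian C] {X Z Y : Set C}

lemma IsCotorsionPair.extZero_one (h : IsCotorsionPair X Z) {X' Z' : C} (hX' : X' ∈ X)
    (hZ' : Z' ∈ Z) : extZero X' Z' 1 :=
  (h.1 X').1 hX' Z' hZ'

lemma exists_extension_along_mono_of_mem_right (hXZ : IsCompleteCotorsionPair X Z)
    (hXZ' : IsHereditaryCotorsionPair X Z) (hZY : IsCotorsionPair Z Y) {M : C} (hM : M ∈ Y)
    {Z₀ W : C} (hZ₀ : Z₀ ∈ Z) (g : Z₀ ⟶ W) [Mono g] (τ : Z₀ ⟶ M) :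
    ∃ ψ : W ⟶ M, g ≫ ψ = τ := by
  obtain ⟨Zc, _, m, _, _, hm, -, hZc⟩ := (hXZ.2 W).2
  have := hm.mono_f
  let S := ShortComplex.mk (g ≫ m) (cokernel.π (g ≫ m)) (cokernel.condition _)
  have hS : S.ShortExact := { exact := S.exact_of_g_is_cokernel (cokernelIsCokernel _) }
  have hC : cokernel (g ≫ m) ∈ Z := (hXZ.1.2 _).2 fun X' hX' =>
    hS.subsingleton_ext_one_X₃_of_g_factors (hXZ'.2 X' hX' Z₀ hZ₀ 2 one_le_two)
      (Category.id_comp _) (hXZ.1.extZero_one hX' hZc)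
  obtain ⟨ψ, hψ⟩ := hS.exists_extension_of_subsingleton_ext_one (hZY.extZero_one hC hM) τ
  exact ⟨m ≫ ψ, by simpa [S] using hψ⟩

lemma exists_extension_along_kernel_ι_of_mem_right (hXZ : IsCompleteCotorsionPair X Z)
    (hXZ' : IsHereditaryCotorsionPair X Z) (hZY : IsCotorsionPair Z Y) {M : C} (hM : M ∈ Y)
    {X₀ N : C} {f : X₀ ⟶ N} (hX₀ : X₀ ∈ X)
    (hf : ∀ X' ∈ X, ∀ u : X' ⟶ N, ∃ k : X' ⟶ X₀, k ≫ f = u) (α : kernel f ⟶ M) :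
    ∃ β : X₀ ⟶ M, kernel.ι f ≫ β = α := by
  obtain ⟨Z₁, X₁, g, p, _, hS, hX₁, hZ₁⟩ := (hXZ.2 N).1
  have := hS.mono_f
  obtain ⟨d, hd⟩ := hf X₁ hX₁ p
  obtain ⟨d', hd'⟩ := hS.exists_lift_of_subsingleton_ext_one (hXZ.1.extZero_one hX₀ hZ₁) f
  exact exists_extension_along_kernel_ι_of_factors hS.exact hd hd'
    (exists_extension_along_mono_of_mem_right hXZ hXZ' hZY hM hZ₁ g) α

lemma mem_right_of_extends (hXZ : IsCompleteCotorsionPair X Z)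
    (hZY : IsCompleteCotorsionPair Z Y) (hZY' : IsHereditaryCotorsionPair Z Y) {M : C}
    (H : ∀ (X₀ N : C) (f : X₀ ⟶ N), Epi f → X₀ ∈ X →
      (∀ X' ∈ X, ∀ u : X' ⟶ N, ∃ k : X' ⟶ X₀, k ≫ f = u) →
      ∀ α : kernel f ⟶ M, ∃ β : X₀ ⟶ M, kernel.ι f ≫ β = α) :
    M ∈ Y := by
  obtain ⟨Y₀, Z₀, _, v, _, hS₀, hZ₀, hY₀⟩ := (hZY.2 M).1
  obtain ⟨Y₁, _, e, c, _, hS₁, -, hY₁⟩ := (hZY.2 Z₀).2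
  obtain ⟨Z₂, X₂, i, σ, hiσ, hS₂, hX₂, hZ₂⟩ := (hXZ.2 Y₁).1
  have := hS₁.mono_f
  have := hS₁.epi_g
  have := hS₂.epi_g
  have happrox : ∀ X' ∈ X, ∀ u : X' ⟶ _, ∃ k : X' ⟶ X₂, k ≫ σ ≫ c = u := fun X' hX' u => by
    obtain ⟨u₁, hu₁⟩ := hS₁.exists_lift_of_subsingleton_ext_one (hXZ.1.extZero_one hX' hZ₀) u
    obtain ⟨u₂, hu₂⟩ := hS₂.exists_lift_of_subsingleton_ext_one (hXZ.1.extZero_one hX' hZ₂) u₁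
    exact ⟨u₂, by simp [reassoc_of% hu₂, hu₁]⟩
  let k := hS₁.exact.lift (kernel.ι (σ ≫ c) ≫ σ) (by simp)
  have hk : k ≫ e = kernel.ι (σ ≫ c) ≫ σ := hS₁.exact.lift_f _ _
  have : Epi k := hS₁.exact.epi_lift_kernel_ι_comp σ
  obtain ⟨β, hβ⟩ := H X₂ _ (σ ≫ c) inferInstance hX₂ happrox (k ≫ v)
  have hiβ : i ≫ β = 0 := by
    have hi : i ≫ σ ≫ c = 0 := by rw [reassoc_of% hiσ, zero_comp]
    have hjk : kernel.lift (σ ≫ c) i hi ≫ k = 0 := by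
      rw [← cancel_mono e]
      simpa [hk] using hiσ
    rw [← kernel.lift_ι (σ ≫ c) i hi, Category.assoc, hβ, ← Category.assoc, hjk, zero_comp]
  obtain ⟨γ, hγ⟩ : ∃ γ : Y₁ ⟶ M, σ ≫ γ = β := ⟨hS₂.exact.desc β hiβ, hS₂.exact.g_desc _ _⟩
  have heγ : e ≫ γ = v := by
    rw [← cancel_epi k, reassoc_of% hk, hγ, hβ]
  exact (hZY.1.2 M).2 fun Z' hZ' => hS₀.subsingleton_ext_one_X₃_of_g_factors
    (hZY'.2 Z' hZ' Y₀ hY₀ 2 one_le_two) heγ (hZY.1.extZero_one hZ' hY₁)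

end CotorsionPairs

/-- Let `(𝒳, 𝒵, 𝒴)` be a complete hereditary cotorsion triple and `M` an object.
Then `M ∈ 𝒴` if and only if, for every epic right `𝒳`-approximation `f : X ⟶ N`,
every morphism `α : Ker f ⟶ M` extends along the kernel inclusion. -/
theorem mem_right_iff_extends (X Z Y : Set A)
    (h : IsCompleteHereditaryCotorsionTriple X Z Y) (M : A) :
    M ∈ Y ↔
      ∀ (X₀ N : A) (f : X₀ ⟶ N), Epi f → X₀ ∈ X →
        (∀ X' ∈ X, ∀ u : X' ⟶ N, ∃ k : X' ⟶ X₀, k ≫ f = u) →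
        ∀ α : kernel f ⟶ M, ∃ β : X₀ ⟶ M, kernel.ι f ≫ β = α := by
  obtain ⟨hXZ, hZY, hXZ', hZY'⟩ := h
  exact ⟨fun hM _ _ _ _ hX₀ hf α =>
      exists_extension_along_kernel_ι_of_mem_right hXZ hXZ' hZY.1 hM hX₀ hf α,
    mem_right_of_extends hXZ hZY hZY'⟩
end

section
/- Let (𝒳, 𝒵, 𝒴) be a complete hereditary cotorsion triple in 𝒜 and let Q, Q' ∈ 𝒳. If a morphism f : Q → Q' factors as f = p ∘ i where i is a monomorphism with projective cokernel and p is an epimorphism with kernel in 𝒵, then there exist projective objects P and F of 𝒜 such that Q ⊕ P ≅ Q' ⊕ F. (In particular, objects of 𝒳 connected by a weak equivalence of the projective model structure become isomorphic in the stable category 𝒳/𝒫.) -/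
open CategoryTheory Abelian Limits ZeroObject

universe v u

variable {A : Type u} [Category.{v} A] [Abelian A]
  [EnoughProjectives A] [EnoughInjectives A]

/-!
In the factorization `Q ⟶ M ⟶ Q'` of `f`, `C := cokernel i` is projective and `K := kernel p ∈ 𝒵`.
Since `C` is projective, `M ≅ Q ⊞ C`, so `M ∈ 𝒳` as `𝒳` is closed under extensions. As
`(𝒳, 𝒵)` is hereditary, `𝒳` is closed under kernels of epimorphisms, so `K ∈ 𝒳 ∩ 𝒵`.
Objects of `𝒳 ∩ 𝒵` are projective: resolving any `N` as `0 ⟶ Y ⟶ Z ⟶ N ⟶ 0` with `Z ∈ 𝒵`,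
`Y ∈ 𝒴`, the group `Ext¹(K, N)` sits between `Ext¹(K, Z) = 0` and `Ext²(K, Y) = 0`.
Finally `Ext¹(Q', K) = 0`, so `M ≅ K ⊞ Q'` as well.
-/

universe w

namespace CategoryTheory.ShortComplex.ShortExact

variable {C : Type*} [Category C] [Abelian C] [HasExt.{w} C] {S : ShortComplex C}

lemma exists_section_of_subsingleton_ext (hS : S.ShortExact)
    [Subsingleton (Abelian.Ext S.X₃ S.X₁ 1)] : ∃ s : S.X₃ ⟶ S.X₂, s ≫ S.g = 𝟙 S.X₃ := by
  obtain ⟨φ, hφ⟩ := Abelian.Ext.covariant_sequence_exact₃ _ hS (Abelian.Ext.mk₀ (𝟙 S.X₃))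
    (zero_add 1) (by subsingleton)
  obtain ⟨s, rfl⟩ := Abelian.Ext.homEquiv₀.symm.surjective φ
  exact ⟨s, Abelian.Ext.homEquiv₀.symm.injective (by simpa using hφ)⟩

lemma nonempty_iso_biprod_of_subsingleton_ext (hS : S.ShortExact)
    [Subsingleton (Abelian.Ext S.X₃ S.X₁ 1)] : Nonempty (S.X₂ ≅ S.X₁ ⊞ S.X₃) :=
  let ⟨s, hs⟩ := hS.exists_section_of_subsingleton_ext
  ⟨(Splitting.ofExactOfSection S hS.exact s hs hS.mono_f).isoBinaryBiproduct⟩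

end CategoryTheory.ShortComplex.ShortExact

section

variable {C : Type*} [Category C] [Abelian C] {Xs Zs Ys : Set C}

namespace IsCotorsionPair

lemma extZero_one_s11 (h : IsCotorsionPair Xs Zs) {X Z : C} (hX : X ∈ Xs) (hZ : Z ∈ Zs) :
    extZero X Z 1 :=
  (h.1 X).1 hX Z hZ

lemma mem_left_of_projective_s11 (h : IsCotorsionPair Xs Zs) (P : C) [Projective P] : P ∈ Xs :=
  (h.1 P).2 fun Z _ ↦ Ext.subsingleton_of_projective P Z 0

lemma X₂_mem_left (h : IsCotorsionPair Xs Zs) {S : ShortComplex C} (hS : S.ShortExact)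
    (h₁ : S.X₁ ∈ Xs) (h₃ : S.X₃ ∈ Xs) : S.X₂ ∈ Xs := by
  refine (h.1 _).2 fun Z hZ ↦ subsingleton_of_forall_eq 0 fun e ↦ ?_
  have : Subsingleton (Ext S.X₁ Z 1) := h.extZero_one_s11 h₁ hZ
  have : Subsingleton (Ext S.X₃ Z 1) := h.extZero_one_s11 h₃ hZ
  obtain ⟨x, rfl⟩ := Ext.contravariant_sequence_exact₂ hS Z e (by subsingleton)
  rw [Subsingleton.elim x 0, Ext.comp_zero]

end IsCotorsionPair

lemma IsHereditaryCotorsionPair.X₁_mem_left_s11 (h : IsHereditaryCotorsionPair Xs Zs)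
    {S : ShortComplex C} (hS : S.ShortExact) (h₂ : S.X₂ ∈ Xs) (h₃ : S.X₃ ∈ Xs) : S.X₁ ∈ Xs := by
  refine (h.1.1 _).2 fun Z hZ ↦ subsingleton_of_forall_eq 0 fun e ↦ ?_
  have : Subsingleton (Ext S.X₂ Z 1) := h.1.extZero_one_s11 h₂ hZ
  have : Subsingleton (Ext S.X₃ Z 2) := h.2 _ h₃ Z hZ 2 (by omega)
  obtain ⟨x, rfl⟩ := Ext.contravariant_sequence_exact₁ hS Z e rfl (by subsingleton)
  rw [Subsingleton.elim x 0, Ext.comp_zero]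

lemma IsCompleteCotorsionPair.projective_of_mem_of_extZero_one
    (hc : IsCompleteCotorsionPair Zs Ys) (hh : IsHereditaryCotorsionPair Zs Ys) {K : C}
    (hK : K ∈ Zs) (hKZ : ∀ Z ∈ Zs, extZero K Z 1) : Projective K := by
  refine projective_iff_subsingleton_ext_one.2 fun N ↦ subsingleton_of_forall_eq 0 fun e ↦ ?_
  obtain ⟨Y, Z, f, g, w, hS, hZ, hY⟩ := (hc.2 N).1
  have : Subsingleton (Ext K Y 2) := hh.2 K hK Y hY 2 (by omega)
  have : Subsingleton (Ext K Z 1) := hKZ Z hZ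
  obtain ⟨x, rfl⟩ := Ext.covariant_sequence_exact₃ K hS e rfl (by subsingleton)
  rw [Subsingleton.elim x 0, Ext.zero_comp]

end

/-- Let `(𝒳, 𝒵, 𝒴)` be a complete hereditary cotorsion triple and `Q, Q' ∈ 𝒳`.
If `f : Q ⟶ Q'` factors as a monomorphism with projective cokernel followed by an
epimorphism with kernel in `𝒵` (a weak equivalence of the projective model
structure), then `Q ⊕ P ≅ Q' ⊕ F` for some projective objects `P`, `F`. -/
theorem stably_iso_of_weakEquiv (Xs Zs Ys : Set A)
    (h : IsCompleteHereditaryCotorsionTriple Xs Zs Ys)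
    {Q Q' : A} (hQ : Q ∈ Xs) (hQ' : Q' ∈ Xs) (f : Q ⟶ Q')
    (hf : ∃ (M : A) (i : Q ⟶ M) (p : M ⟶ Q'),
      i ≫ p = f ∧ Mono i ∧ Projective (cokernel i) ∧ Epi p ∧ kernel p ∈ Zs) :
    ∃ (P F : A), Projective P ∧ Projective F ∧ Nonempty ((Q ⊞ P) ≅ (Q' ⊞ F)) := by
  obtain ⟨M, i, p, -, hi, hC, hp, hK⟩ := hf
  obtain ⟨-, hZY, hXZ, hZY_hered⟩ := h
  have hS₁ : (ShortComplex.mk i (cokernel.π i) (cokernel.condition i)).ShortExact :=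
    { exact := ShortComplex.exact_cokernel i }
  have hS₂ : (ShortComplex.mk (kernel.ι p) p (kernel.condition p)).ShortExact :=
    { exact := ShortComplex.exact_kernel p }
  have hM : M ∈ Xs := hXZ.1.X₂_mem_left hS₁ hQ (hXZ.1.mem_left_of_projective_s11 _)
  have hKX : kernel p ∈ Xs := hXZ.X₁_mem_left_s11 hS₂ hM hQ'
  have hKproj : Projective (kernel p) :=
    hZY.projective_of_mem_of_extZero_one hZY_hered hK fun Z hZ ↦ hXZ.1.extZero_one_s11 hKX hZ
  have : Subsingleton (Ext (cokernel i) Q 1) := Ext.subsingleton_of_projective _ _ 0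
  have : Subsingleton (Ext Q' (kernel p) 1) := hXZ.1.extZero_one_s11 hQ' hK
  obtain ⟨e₁⟩ := hS₁.nonempty_iso_biprod_of_subsingleton_ext
  obtain ⟨e₂⟩ := hS₂.nonempty_iso_biprod_of_subsingleton_ext
  exact ⟨cokernel i, kernel p, hC, hKproj, ⟨e₁.symm ≪≫ e₂ ≪≫ biprod.braiding _ _⟩⟩
end

section
/- Let (𝒳, 𝒵, 𝒴) be a complete hereditary cotorsion triple in 𝒜 and let M be an object of 𝒜. If there exists an integer n ≥ 0 such that Ext^k(X, M) = 0 for every X ∈ 𝒳 and every k ≥ n + 1, then M ∈ 𝒵; in particular Ext^k(X, M) = 0 for every X ∈ 𝒳 and every k ≥ 1. (Thus the 𝒳-injective dimension of any object is either 0 or ∞.) -/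
open CategoryTheory Abelian Limits ZeroObject

universe v u

variable {A : Type u} [Category.{v} A] [Abelian A]
  [EnoughProjectives A] [EnoughInjectives A]

/-!
Objects of `𝒳 ∩ 𝒵` are Ext-projective: resolving any `N` as `0 → Y → Z → N → 0` with `Z ∈ 𝒵`,
`Y ∈ 𝒴`, heredity kills `Ext^k(W, Z)` and `Ext^{k+1}(W, Y)`. Every `X ∈ 𝒳` embeds as
`0 → X → Z'' → X'' → 0` with `X'' ∈ 𝒳`, `Z'' ∈ 𝒵`, and `Z'' ∈ 𝒳` since `𝒳` is closed under
extensions; so `Ext^k(X, M)` is a quotient of `Ext^{k+1}(X'', M)` for `k ≥ 1`. Vanishing of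
`Ext^{≥ n+1}(𝒳, M)` therefore propagates down to `Ext^{≥ 1}(𝒳, M) = 0`, i.e. `M ∈ 𝒵`.
-/

section

omit [EnoughProjectives A] [EnoughInjectives A]

namespace CategoryTheory.ShortComplex.ShortExact

variable {S : ShortComplex A} (hS : S.ShortExact)
include hS

lemma extZero_X₁_left {Y : A} {n : ℕ} (h₂ : extZero S.X₂ Y n) (h₃ : extZero S.X₃ Y (n + 1)) :
    extZero S.X₁ Y n := by
  refine subsingleton_of_forall_eq 0 fun x => ?_
  obtain ⟨x₂, rfl⟩ := Ext.contravariant_sequence_exact₁ hS Y x (add_comm 1 n)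
    (h₃.elim _ _)
  rw [h₂.elim x₂ 0, Ext.comp_zero]

lemma extZero_X₂_left {Y : A} {n : ℕ} (h₁ : extZero S.X₁ Y n) (h₃ : extZero S.X₃ Y n) :
    extZero S.X₂ Y n := by
  refine subsingleton_of_forall_eq 0 fun x => ?_
  obtain ⟨x₃, rfl⟩ := Ext.contravariant_sequence_exact₂ hS Y x (h₁.elim _ _)
  rw [h₃.elim x₃ 0, Ext.comp_zero]

lemma extZero_X₃_right {X : A} {n : ℕ} (h₂ : extZero X S.X₂ n) (h₁ : extZero X S.X₁ (n + 1)) :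
    extZero X S.X₃ n := by
  refine subsingleton_of_forall_eq 0 fun x => ?_
  obtain ⟨x₂, rfl⟩ := Ext.covariant_sequence_exact₃ X hS x rfl (h₁.elim _ _)
  rw [h₂.elim x₂ 0, Ext.zero_comp]

end CategoryTheory.ShortComplex.ShortExact

variable {Xs Zs Ys : Set A}

lemma IsCotorsionPair.mem_left_of_shortExact (hp : IsCotorsionPair Xs Zs) {S : ShortComplex A}
    (hS : S.ShortExact) (h₁ : S.X₁ ∈ Xs) (h₃ : S.X₃ ∈ Xs) : S.X₂ ∈ Xs :=
  (hp.1 _).mpr fun Z hZ => hS.extZero_X₂_left ((hp.1 _).mp h₁ Z hZ) ((hp.1 _).mp h₃ Z hZ)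

lemma extZero_of_mem_inter (hXZ : IsHereditaryCotorsionPair Xs Zs)
    (hZY : IsHereditaryCotorsionPair Zs Ys) (hZY' : IsCompleteCotorsionPair Zs Ys)
    {W : A} (hW : W ∈ Xs ∩ Zs) (N : A) {k : ℕ} (hk : 1 ≤ k) : extZero W N k := by
  obtain ⟨⟨Y, Z, f, g, w, hS, hZ, hY⟩, -⟩ := hZY'.2 N
  exact hS.extZero_X₃_right (hXZ.2 W hW.1 Z hZ k hk) (hZY.2 W hW.2 Y hY (k + 1) (by omega))

lemma IsCompleteCotorsionPair.extZero_of_extZero_succ (hXZ : IsCompleteCotorsionPair Xs Zs)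
    {M : A} {k : ℕ} (hproj : ∀ W ∈ Xs ∩ Zs, extZero W M k)
    (hsucc : ∀ X ∈ Xs, extZero X M (k + 1)) : ∀ X ∈ Xs, extZero X M k := by
  intro X hX
  obtain ⟨-, Z, X', f, g, w, hS, hX', hZ⟩ := hXZ.2 X
  have hZX : Z ∈ Xs := hXZ.1.mem_left_of_shortExact hS hX hX'
  exact hS.extZero_X₁_left (hproj Z ⟨hZX, hZ⟩) (hsucc X' hX')

end

/-- Let `(𝒳, 𝒵, 𝒴)` be a complete hereditary cotorsion triple and `M` an object.
If `Ext^k(X, M) = 0` for every `X ∈ 𝒳` and every `k ≥ n + 1` for some `n ≥ 0`,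
then `M ∈ 𝒵`; in particular `Ext^k(X, M) = 0` for every `X ∈ 𝒳` and every `k ≥ 1`.
(The `𝒳`-injective dimension of any object is `0` or `∞`.) -/
theorem xInjDim_zero_or_infty (Xs Zs Ys : Set A)
    (h : IsCompleteHereditaryCotorsionTriple Xs Zs Ys)
    (M : A) (n : ℕ) (hvan : ∀ X ∈ Xs, ∀ k : ℕ, n + 1 ≤ k → extZero X M k) :
    M ∈ Zs ∧ ∀ X ∈ Xs, ∀ k : ℕ, 1 ≤ k → extZero X M k := by
  obtain ⟨hXZ, hZY, herXZ, herZY⟩ := h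
  have hshift : ∀ k, 1 ≤ k → (∀ X ∈ Xs, extZero X M (k + 1)) → ∀ X ∈ Xs, extZero X M k :=
    fun k hk => hXZ.extZero_of_extZero_succ fun W hW => extZero_of_mem_inter herXZ herZY hZY hW M hk
  have hall : ∀ k, 1 ≤ k → ∀ X ∈ Xs, extZero X M k := fun k hk =>
    Nat.decreasingInduction' (fun j _ hkj => hshift j (hk.trans hkj)) (Nat.le_add_right k n)
      fun X hX => hvan X hX _ (by omega)
  exact ⟨(hXZ.1.2 M).mpr fun X hX => hall 1 le_rfl X hX, fun X hX k hk => hall k hk X hX⟩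
end

section
/- Let (𝒳, 𝒵, 𝒴) be a complete hereditary cotorsion triple in 𝒜 and let M be an object of 𝒜. If there exists an integer n ≥ 0 such that Ext^k(M, Y) = 0 for every Y ∈ 𝒴 and every k ≥ n + 1, then M ∈ 𝒵; in particular Ext^k(M, Y) = 0 for every Y ∈ 𝒴 and every k ≥ 1. (Thus the 𝒴-projective dimension of any object is either 0 or ∞.) -/
open CategoryTheory Abelian Limits ZeroObject

universe v u

variable {A : Type u} [Category.{v} A] [Abelian A]
  [EnoughProjectives A] [EnoughInjectives A]

/-!
Completeness of `(𝒵, 𝒴)` gives `0 → Y₁ → W → M → 0` with `W ∈ 𝒵` and `Y₁ ∈ 𝒴`. Since `(𝒵, 𝒴)` is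
hereditary, `Ext^k(W, Y) = 0` for `k ≥ 1`, so dimension shifting gives
`Ext^k(Y₁, Y) ≅ Ext^{k+1}(M, Y)`, lowering the bound `n` by one; by induction `Y₁ ∈ 𝒵`, and
`M ∈ 𝒵` because the right class of the hereditary pair `(𝒳, 𝒵)` is closed under cokernels of
monomorphisms. The case `n = 0` is the defining property of `𝒵` as the left class of `(𝒵, 𝒴)`.
-/

section

omit [EnoughProjectives A] [EnoughInjectives A]

namespace CategoryTheory.ShortComplex.ShortExact

variable {S : ShortComplex A}

lemma extZero_X₁ (hS : S.ShortExact) {Y : A} {k : ℕ}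
    (h₂ : extZero S.X₂ Y k) (h₃ : extZero S.X₃ Y (k + 1)) : extZero S.X₁ Y k := by
  unfold extZero at *
  refine subsingleton_of_forall_eq 0 fun x => ?_
  obtain ⟨x₂, rfl⟩ := Ext.contravariant_sequence_exact₁ hS Y x (add_comm 1 k)
    (Subsingleton.elim _ _)
  rw [Subsingleton.elim x₂ 0, Ext.comp_zero]

lemma extZero_X₃ (hS : S.ShortExact) {X : A} {k : ℕ}
    (h₂ : extZero X S.X₂ k) (h₁ : extZero X S.X₁ (k + 1)) : extZero X S.X₃ k := by
  unfold extZero at *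
  refine subsingleton_of_forall_eq 0 fun x => ?_
  obtain ⟨x₂, rfl⟩ := Ext.covariant_sequence_exact₃ X hS x rfl (Subsingleton.elim _ _)
  rw [Subsingleton.elim x₂ 0, Ext.zero_comp]

end CategoryTheory.ShortComplex.ShortExact

lemma IsHereditaryCotorsionPair.mem_right_of_shortExact {Xs Zs : Set A}
    (h : IsHereditaryCotorsionPair Xs Zs) {S : ShortComplex A} (hS : S.ShortExact)
    (h₁ : S.X₁ ∈ Zs) (h₂ : S.X₂ ∈ Zs) : S.X₃ ∈ Zs :=
  (h.1.2 _).2 fun X hX => hS.extZero_X₃ ((h.1.2 _).1 h₂ X hX) (h.2 X hX _ h₁ 2 one_le_two)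

lemma mem_of_eventually_extZero {Xs Zs Ys : Set A} (hXZ : IsHereditaryCotorsionPair Xs Zs)
    (hZY : IsHereditaryCotorsionPair Zs Ys) (hZYc : IsCompleteCotorsionPair Zs Ys) (n : ℕ)
    {M : A} (hM : ∀ Y ∈ Ys, ∀ k : ℕ, n + 1 ≤ k → extZero M Y k) : M ∈ Zs := by
  induction n generalizing M with
  | zero => exact (hZY.1.1 M).2 fun Y hY => hM Y hY 1 le_rfl
  | succ n ih =>
    obtain ⟨Y₁, W, _, _, _, hS, hW, -⟩ := (hZYc.2 M).1
    have hY₁ : Y₁ ∈ Zs := ih fun Y hY k hk =>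
      hS.extZero_X₁ (hZY.2 W hW Y hY k (by omega)) (hM Y hY (k + 1) (by omega))
    exact hXZ.mem_right_of_shortExact hS hY₁ hW

end

/-- Let `(𝒳, 𝒵, 𝒴)` be a complete hereditary cotorsion triple and `M` an object.
If `Ext^k(M, Y) = 0` for every `Y ∈ 𝒴` and every `k ≥ n + 1` for some `n ≥ 0`,
then `M ∈ 𝒵`; in particular `Ext^k(M, Y) = 0` for every `Y ∈ 𝒴` and every `k ≥ 1`.
(The `𝒴`-projective dimension of any object is `0` or `∞`.) -/
theorem yProjDim_zero_or_infty (Xs Zs Ys : Set A)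
    (h : IsCompleteHereditaryCotorsionTriple Xs Zs Ys)
    (M : A) (n : ℕ) (hvan : ∀ Y ∈ Ys, ∀ k : ℕ, n + 1 ≤ k → extZero M Y k) :
    M ∈ Zs ∧ ∀ Y ∈ Ys, ∀ k : ℕ, 1 ≤ k → extZero M Y k := by
  obtain ⟨-, hZYc, hXZ, hZY⟩ := h
  have hM : M ∈ Zs := mem_of_eventually_extZero hXZ hZY hZYc n hvan
  exact ⟨hM, hZY.2 M hM⟩
end

section
/- Let (𝒳, 𝒵, 𝒴) be a complete hereditary cotorsion triple in 𝒜, let N be an object of 𝒜, and let n ≥ 1 be an integer. Suppose 0 → N → Y⁰ → ⋯ → Y^{n-2} → Y^{n-1} → L → 0 is an exact sequence in 𝒜 with Y⁰, …, Y^{n-1} ∈ 𝒴. Then L ∈ 𝒴 if and only if Ext^k(Z, N) = 0 for every Z ∈ 𝒵 and every k ≥ n + 1. In particular, whether the n-th cosyzygy L lies in 𝒴 does not depend on the chosen exact sequence. -/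
/-! By heredity of `(𝒵, 𝒴)`, every `Yʲ` has `Extᵏ(Z, Yʲ) = 0` for `Z ∈ 𝒵` and `k ≥ 1`. Cutting the
sequence into short exact sequences `0 → Kʲ → Yʲ → Kʲ⁺¹ → 0` through the images and shifting
dimension along each gives `Extᵏ⁺ⁿ(Z, N) ≅ Extᵏ(Z, L)` for `k ≥ 1`. Since `L ∈ 𝒴` means
`Ext¹(𝒵, L) = 0`, and then all higher `Ext(𝒵, L)` vanish by heredity, both directions follow. -/

open CategoryTheory Abelian Limits ZeroObject

universe v u

variable {A : Type u} [Category.{v} A] [Abelian A]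
  [EnoughProjectives A] [EnoughInjectives A]

namespace CategoryTheory

universe w v' u'

variable {C : Type u'} [Category.{v'} C] [Abelian C]

noncomputable def ShortComplex.images (S : ShortComplex C) : ShortComplex C :=
  ShortComplex.mk (Abelian.image.ι S.f) (Abelian.factorThruImage S.g) <| by
    rw [← cancel_mono (Abelian.image.ι S.g), Category.assoc, Abelian.image.fac,
      Limits.zero_comp, Abelian.image_ι_comp_eq_zero S.zero]

lemma ShortComplex.Exact.shortExact_images {S : ShortComplex C} (hS : S.Exact) :
    S.images.ShortExact := by
  let T : ShortComplex C := ShortComplex.mk S.f (Abelian.factorThruImage S.g) <| by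
    rw [← cancel_mono (Abelian.image.ι S.g), Category.assoc, Abelian.image.fac, S.zero,
      Limits.zero_comp]
  have hT : T.Exact := (ShortComplex.exact_iff_of_epi_of_isIso_of_mono (S₁ := T) (S₂ := S)
    { τ₁ := 𝟙 _, τ₂ := 𝟙 _, τ₃ := Abelian.image.ι S.g }).2 hS
  have : Mono S.images.f := inferInstanceAs (Mono (Abelian.image.ι S.f))
  have : Epi S.images.g := inferInstanceAs (Epi (Abelian.factorThruImage S.g))
  exact ⟨(ShortComplex.exact_iff_exact_image_ι T).1 hT⟩

variable [HasExt.{w} C]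

lemma subsingleton_ext_iff_of_iso (Z : C) {M M' : C} (e : M ≅ M') (k : ℕ) :
    Subsingleton (Ext.{w} Z M k) ↔ Subsingleton (Ext.{w} Z M' k) :=
  ((Abelian.extFunctorObj Z k).mapIso e).addCommGroupIsoToAddEquiv.toEquiv.subsingleton_congr

lemma ShortComplex.ShortExact.subsingleton_ext_succ_iff {S : ShortComplex C} (hS : S.ShortExact)
    (Z : C) (hX₂ : ∀ i, 1 ≤ i → Subsingleton (Ext.{w} Z S.X₂ i)) {k : ℕ} (hk : 1 ≤ k) :
    Subsingleton (Ext.{w} Z S.X₁ (k + 1)) ↔ Subsingleton (Ext.{w} Z S.X₃ k) := by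
  constructor
  · intro h
    refine subsingleton_of_forall_eq 0 fun x => ?_
    obtain ⟨y, rfl⟩ := Abelian.Ext.covariant_sequence_exact₃ Z hS x rfl (Subsingleton.elim _ _)
    rw [(hX₂ k hk).elim y 0, Abelian.Ext.zero_comp]
  · intro h
    refine subsingleton_of_forall_eq 0 fun x => ?_
    obtain ⟨y, rfl⟩ := Abelian.Ext.covariant_sequence_exact₁ Z hS x
      ((hX₂ (k + 1) (by omega)).elim _ _) rfl
    rw [h.elim y 0, Abelian.Ext.zero_comp]

lemma ComposableArrows.Exact.subsingleton_ext_add_iff {n : ℕ} {S : ComposableArrows C (n + 3)}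
    (hS : S.Exact) (h₀ : IsZero (S.obj' 0)) (h₃ : IsZero (S.obj' (n + 3))) (Z : C)
    (hacyc : ∀ (i : ℕ) (hi : i + 2 ≤ n + 1) (l : ℕ), 1 ≤ l →
      Subsingleton (Ext.{w} Z (S.obj' (i + 2)) l))
    {k : ℕ} (hk : 1 ≤ k) :
    Subsingleton (Ext.{w} Z (S.obj' 1) (k + n)) ↔ Subsingleton (Ext.{w} Z (S.obj' (n + 2)) k) := by
  -- `Kʲ := image (S.map' (j + 1) (j + 2))`, with `K⁰ ≅ S.obj' 1` and `Kⁿ ≅ S.obj' (n + 2)`.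
  have shift : ∀ j (hj : j ≤ n) (m : ℕ), 1 ≤ m →
      (Subsingleton (Ext.{w} Z (Abelian.image (S.map' 1 2)) (m + j)) ↔
        Subsingleton (Ext.{w} Z (Abelian.image (S.map' (j + 1) (j + 2))) m)) := by
    intro j
    induction j with
    | zero => exact fun _ _ _ => Iff.rfl
    | succ j ih =>
      intro hj m hm
      rw [show m + (j + 1) = m + 1 + j by omega, ih (by omega) (m + 1) (by omega)]
      exact (hS.exact (j + 1)).shortExact_images.subsingleton_ext_succ_iff Z
        (hacyc j (by omega)) hm
  have : Mono (S.map' 1 2) := (hS.exact 0).mono_g (h₀.eq_of_src _ _)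
  have : Epi (S.map' (n + 1) (n + 2)) := (hS.exact (n + 1)).epi_f (h₃.eq_of_tgt _ _)
  have : Epi (Abelian.image.ι (S.map' (n + 1) (n + 2))) := epi_of_epi_fac (Abelian.image.fac _)
  rw [subsingleton_ext_iff_of_iso Z (asIso (Abelian.factorThruImage (S.map' 1 2))),
    ← subsingleton_ext_iff_of_iso Z (asIso (Abelian.image.ι (S.map' (n + 1) (n + 2))))]
  exact shift n le_rfl k hk

end CategoryTheory

/-- Let `(𝒳, 𝒵, 𝒴)` be a complete hereditary cotorsion triple, `N` an object,
`n ≥ 1`, and let `0 → N → Y⁰ → ⋯ → Y^{n-1} → L → 0` be an exact sequence with all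
`Y^j ∈ 𝒴` (encoded as an exact sequence of `n + 3` composable arrows whose two
extreme objects are zero, with `N = S.obj' 1`, `L = S.obj' (n + 2)`, and the middle
objects in `𝒴`). Then `L ∈ 𝒴` iff `Ext^k(Z, N) = 0` for all `Z ∈ 𝒵`, `k ≥ n + 1`. -/
theorem nth_cosyzygy_mem_iff (Xs Zs Ys : Set A)
    (h : IsCompleteHereditaryCotorsionTriple Xs Zs Ys)
    (n : ℕ)
    (S : ComposableArrows A (n + 3)) (hS : S.Exact)
    (hzero : IsZero (S.obj' 0)) (hzero' : IsZero (S.obj' (n + 3)))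
    (hmid : ∀ (i : ℕ) (h2 : 2 ≤ i) (hi : i ≤ n + 1), S.obj' i (by omega) ∈ Ys) :
    S.obj' (n + 2) ∈ Ys ↔
      ∀ Z ∈ Zs, ∀ k : ℕ, n + 1 ≤ k → extZero Z (S.obj' 1) k := by
  obtain ⟨-, -, -, ⟨⟨-, hYs⟩, hher⟩⟩ := h
  have shift : ∀ Z ∈ Zs, ∀ k, 1 ≤ k →
      (extZero Z (S.obj' 1) (k + n) ↔ extZero Z (S.obj' (n + 2)) k) := fun Z hZ k hk =>
    hS.subsingleton_ext_add_iff hzero hzero' Z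
      (fun i hi l hl => hher Z hZ _ (hmid (i + 2) (by omega) hi) l hl) hk
  constructor
  · intro hL Z hZ k hk
    have hk' := (shift Z hZ (k - n) (by omega)).2 (hher Z hZ _ hL _ (by omega))
    rwa [Nat.sub_add_cancel (by omega)] at hk'
  · exact fun hext => (hYs _).2 fun Z hZ => (shift Z hZ 1 le_rfl).1 (hext Z hZ (1 + n) (by omega))
end

section
/- Let (𝒳, 𝒵, 𝒴) be a complete hereditary cotorsion triple in 𝒜 and let n ≥ 0 be an integer. Then Ext^k(M, Z) = 0 for every object M of 𝒜, every Z ∈ 𝒵 and every k ≥ n + 1, if and only if Ext^k(Z, N) = 0 for every object N of 𝒜, every Z ∈ 𝒵 and every k ≥ n + 1. (That is, the global 𝒵-projective dimension of 𝒜 equals its global 𝒵-injective dimension; equivalently, the global 𝒳-resolution dimension of 𝒜 equals the global 𝒴-coresolution dimension of 𝒜.) -/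
open CategoryTheory Abelian Limits ZeroObject

universe v u

variable {A : Type u} [Category.{v} A] [Abelian A]
  [EnoughProjectives A] [EnoughInjectives A]

/-!
Given `Ext^{≥ n+1}(-, 𝒵) = 0`, resolve an arbitrary `N` by a special `𝒵`-precover
`0 → Y → C → N → 0` with `C ∈ 𝒵`, `Y ∈ 𝒴`: in the long exact sequence
`Ext^k(Z, C) → Ext^k(Z, N) → Ext^{k+1}(Z, Y)` the left term vanishes by assumption and
the right one because `(𝒵, 𝒴)` is hereditary. Dually, a special `𝒵`-preenvelope
`0 → M → C → X → 0` with `X ∈ 𝒳` gives the converse.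
-/

omit [EnoughProjectives A] [EnoughInjectives A] in
lemma extZero_X₃_of_shortExact {S : ShortComplex A} (hS : S.ShortExact) {Z : A} {k : ℕ}
    (h₂ : extZero Z S.X₂ k) (h₁ : extZero Z S.X₁ (k + 1)) : extZero Z S.X₃ k := by
  refine subsingleton_of_forall_eq 0 fun x => ?_
  obtain ⟨y, rfl⟩ := Ext.covariant_sequence_exact₃ Z hS x rfl (h₁.elim _ _)
  rw [h₂.elim y 0, Ext.zero_comp]

omit [EnoughProjectives A] [EnoughInjectives A] in
lemma extZero_X₁_of_shortExact {S : ShortComplex A} (hS : S.ShortExact) {Z : A} {k : ℕ}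
    (h₂ : extZero S.X₂ Z k) (h₃ : extZero S.X₃ Z (1 + k)) : extZero S.X₁ Z k := by
  refine subsingleton_of_forall_eq 0 fun x => ?_
  obtain ⟨y, rfl⟩ := Ext.contravariant_sequence_exact₁ hS Z x rfl (h₃.elim _ _)
  rw [h₂.elim y 0, Ext.comp_zero]

/-- Let `(𝒳, 𝒵, 𝒴)` be a complete hereditary cotorsion triple and `n ≥ 0`. Then
`Ext^k(M, Z) = 0` for all objects `M`, all `Z ∈ 𝒵` and all `k ≥ n + 1` iff
`Ext^k(Z, N) = 0` for all objects `N`, all `Z ∈ 𝒵` and all `k ≥ n + 1`.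
(The global `𝒵`-projective dimension of `𝒜` equals its global `𝒵`-injective
dimension.) -/
theorem global_zProjDim_eq_zInjDim (Xs Zs Ys : Set A)
    (h : IsCompleteHereditaryCotorsionTriple Xs Zs Ys) (n : ℕ) :
    (∀ M : A, ∀ Z ∈ Zs, ∀ k : ℕ, n + 1 ≤ k → extZero M Z k) ↔
    (∀ N : A, ∀ Z ∈ Zs, ∀ k : ℕ, n + 1 ≤ k → extZero Z N k) := by
  obtain ⟨⟨-, hXZ⟩, ⟨-, hZY⟩, ⟨-, hXZ_ext⟩, ⟨-, hZY_ext⟩⟩ := h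
  constructor
  · intro hproj N Z hZ k hk
    obtain ⟨⟨Y, C, _, _, _, hS, hC, hY⟩, -⟩ := hZY N
    exact extZero_X₃_of_shortExact hS (hproj Z C hC k hk) (hZY_ext Z hZ Y hY (k + 1) (by omega))
  · intro hinj M Z hZ k hk
    obtain ⟨-, ⟨C, X, _, _, _, hS, hX, hC⟩⟩ := hXZ M
    exact extZero_X₁_of_shortExact hS (hinj Z C hC k hk) (hXZ_ext X hX Z hZ (1 + k) (by omega))
end

section
/- Let (𝒳, 𝒵, 𝒴) be a complete hereditary cotorsion triple in 𝒜 and let n ≥ 0 be an integer. Then the following are equivalent: (1) Ext^k(M, Z) = 0 for every object M of 𝒜, every Z ∈ 𝒵 and every k ≥ n + 1 (the global 𝒵-projective dimension of 𝒜 is at most n); (2) every Z ∈ 𝒵 has projective dimension at most n, i.e., Ext^k(Z, N) = 0 for every object N and every k ≥ n + 1; (3) every Z ∈ 𝒵 has injective dimension at most n, i.e., Ext^k(N, Z) = 0 for every object N and every k ≥ n + 1. -/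
open CategoryTheory Abelian Limits ZeroObject

universe v u

variable {A : Type u} [Category.{v} A] [Abelian A]
  [EnoughProjectives A] [EnoughInjectives A]

/-!
(3) is (1) with the quantifiers reordered. For (1) ⇒ (2), resolve `N` by a special
`𝒵`-precover `0 → Y → Z' → N → 0` of the complete pair `(𝒵, 𝒴)`: the long exact sequence
`Ext^k(Z, Z') → Ext^k(Z, N) → Ext^{k+1}(Z, Y)` has vanishing outer terms by (1) and heredity.
Dually, for (2) ⇒ (3) embed `N` by a special `𝒵`-preenvelope `0 → N → Z' → X → 0` of `(𝒳, 𝒵)`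
and use `Ext^k(Z', Z) → Ext^k(N, Z) → Ext^{k+1}(X, Z)`.
-/

universe w

section ShortExact

variable {C : Type*} [Category C] [Abelian C] [HasExt.{w} C] {S : ShortComplex C} {T : C} {k : ℕ}

lemma CategoryTheory.ShortComplex.ShortExact.subsingleton_ext_X₃ (hS : S.ShortExact)
    (h₂ : Subsingleton (Ext.{w} T S.X₂ k)) (h₁ : Subsingleton (Ext.{w} T S.X₁ (k + 1))) :
    Subsingleton (Ext.{w} T S.X₃ k) :=
  subsingleton_of_forall_eq 0 fun x => by
    obtain ⟨x₂, rfl⟩ := Ext.covariant_sequence_exact₃ T hS x rfl (Subsingleton.elim _ 0)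
    rw [Subsingleton.elim x₂ 0, Ext.zero_comp]

lemma CategoryTheory.ShortComplex.ShortExact.subsingleton_ext_X₁ (hS : S.ShortExact)
    (h₂ : Subsingleton (Ext.{w} S.X₂ T k)) (h₃ : Subsingleton (Ext.{w} S.X₃ T (1 + k))) :
    Subsingleton (Ext.{w} S.X₁ T k) :=
  subsingleton_of_forall_eq 0 fun x => by
    obtain ⟨x₂, rfl⟩ := Ext.contravariant_sequence_exact₁ hS T x rfl (Subsingleton.elim _ 0)
    rw [Subsingleton.elim x₂ 0, Ext.comp_zero]

end ShortExact

namespace IsCompleteCotorsionPair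

variable {C : Type*} [Category C] [Abelian C] {Xs Zs : Set C}

lemma extZero_of_forall_mem_left (hc : IsCompleteCotorsionPair Xs Zs)
    (hh : IsHereditaryCotorsionPair Xs Zs) {M : C} (hM : M ∈ Xs) {k : ℕ}
    (h : ∀ X ∈ Xs, extZero M X k) (N : C) : extZero M N k := by
  obtain ⟨⟨Z, X, _, _, _, hS, hX, hZ⟩, -⟩ := hc.2 N
  exact hS.subsingleton_ext_X₃ (h X hX) (hh.2 M hM Z hZ (k + 1) (by omega))

lemma extZero_of_forall_mem_right (hc : IsCompleteCotorsionPair Xs Zs)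
    (hh : IsHereditaryCotorsionPair Xs Zs) {M : C} (hM : M ∈ Zs) {k : ℕ}
    (h : ∀ Z ∈ Zs, extZero Z M k) (N : C) : extZero N M k := by
  obtain ⟨-, ⟨Z, X, _, _, _, hS, hX, hZ⟩⟩ := hc.2 N
  exact hS.subsingleton_ext_X₁ (h Z hZ) (hh.2 X hX M hM (1 + k) (by omega))

end IsCompleteCotorsionPair

/-- Let `(𝒳, 𝒵, 𝒴)` be a complete hereditary cotorsion triple and `n ≥ 0`. The
following are equivalent: (1) `Ext^k(M, Z) = 0` for every object `M`, every
`Z ∈ 𝒵` and every `k ≥ n + 1`; (2) every `Z ∈ 𝒵` has projective dimension at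
most `n`; (3) every `Z ∈ 𝒵` has injective dimension at most `n`. -/
theorem global_zDim_le_iff (Xs Zs Ys : Set A)
    (h : IsCompleteHereditaryCotorsionTriple Xs Zs Ys) (n : ℕ) :
    [∀ M : A, ∀ Z ∈ Zs, ∀ k : ℕ, n + 1 ≤ k → extZero M Z k,
     ∀ Z ∈ Zs, ∀ N : A, ∀ k : ℕ, n + 1 ≤ k → extZero Z N k,
     ∀ Z ∈ Zs, ∀ N : A, ∀ k : ℕ, n + 1 ≤ k → extZero N Z k].TFAE := by
  obtain ⟨hcXZ, hcZY, hhXZ, hhZY⟩ := h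
  tfae_have 1 → 2 := fun h1 Z hZ N k hk =>
    hcZY.extZero_of_forall_mem_left hhZY hZ (fun Z' hZ' => h1 Z Z' hZ' k hk) N
  tfae_have 2 → 3 := fun h2 Z hZ N k hk =>
    hcXZ.extZero_of_forall_mem_right hhXZ hZ (fun Z' hZ' => h2 Z' hZ' Z k hk) N
  tfae_have 3 → 1 := fun h3 M Z hZ k hk => h3 Z hZ M k hk
  tfae_finish
end
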